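/- Let H be a Hopf algebra with bijective antipode S, L a 1-dimensional H-module on which H acts via an algebra map β : H → k. Then H_β := H with action h ·_β a = β(h_{(2)}) h_{(3)} a S^{-1}(h_{(1)}) and coaction Δ is a (left-right) Yetter–Drinfel'd H-module, i.e., it satisfies ρ(h ·_β a) = h_{(2)} ·_β a_{(1)} ⊗ h_{(3)} a_{(2)} S^{-1}(h_{(1)}) for all h, a ∈ H. -/

import Mathlib

/-!
Let `A` be the action of `(H ⊗ H) ⊗ H` on `H` given by `((x ⊗ y) ⊗ z) · a = β(y) z a S⁻¹(x)`.
Since `S⁻¹` is anti-multiplicative and `β` is multiplicative, `A` is a module action, and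
`h ·_β a` is its pullback along the algebra map `h ↦ (h₁ ⊗ h₂) ⊗ h₃`; this gives the module axioms.
Because `S⁻¹` is a coalgebra anti-morphism, `Δ(S⁻¹ x) = S⁻¹ x₂ ⊗ S⁻¹ x₁`, both sides of the
Yetter–Drinfel'd condition become `β(h₃) h₄ a₁ S⁻¹(h₂) ⊗ h₅ a₂ S⁻¹(h₁)` after coassociativity.

That `S` is a coalgebra anti-morphism follows from the convolution algebra `Hom(H, H ⊗ H)`:
`Δ` has the right inverse `Δ ∘ S` and the left inverse `(S ⊗ S) ∘ flip ∘ Δ`. The latter holds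
because `Δ = ιₗ * ιᵣ` and `(S ⊗ S) ∘ flip ∘ Δ = (ιᵣ ∘ S) * (ιₗ ∘ S)` for the two algebra
inclusions `ιₗ, ιᵣ : H → H ⊗ H`, and `(ι ∘ S) * ι = 1` for any algebra map `ι`.
-/

open TensorProduct

variable {k H : Type*} [Field k] [Ring H] [HopfAlgebra k H]

/-- Iterated comultiplication `h ↦ (h₁ ⊗ h₂) ⊗ h₃`. -/
noncomputable def comul2 : H →ₗ[k] (H ⊗[k] H) ⊗[k] H :=
  (TensorProduct.map (Coalgebra.comul (R := k)) (LinearMap.id : H →ₗ[k] H)) ∘ₗ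
    Coalgebra.comul (R := k)

/-- Radford's action on `H_β`: `h ·_β a = β(h₂) h₃ a S⁻¹(h₁)`, as a linear map
`H ⊗ H →ₗ H` (first factor acting on the second). -/
noncomputable def radfordAct (β : H →ₐ[k] k) (Sinv : H →ₗ[k] H) :
    H ⊗[k] H →ₗ[k] H :=
  LinearMap.mul' k H ∘ₗ (TensorProduct.comm k H H).toLinearMap ∘ₗ
    (TensorProduct.map
      ((TensorProduct.rid k H).toLinearMap ∘ₗ TensorProduct.map Sinv β.toLinearMap)
      (LinearMap.mul' k H)) ∘ₗ
    (TensorProduct.assoc k (H ⊗[k] H) H H).toLinearMap ∘ₗ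
    (TensorProduct.map comul2 (LinearMap.id : H →ₗ[k] H))

/-- `(h₃ ⊗ a₂) ⊗ h₁ ↦ h₃ a₂ S⁻¹(h₁)`. -/
noncomputable def radfordQ (Sinv : H →ₗ[k] H) : (H ⊗[k] H) ⊗[k] H →ₗ[k] H :=
  LinearMap.mul' k H ∘ₗ TensorProduct.map (LinearMap.mul' k H) Sinv

/-- `h₁ ⊗ (h₃ ⊗ (a₁ ⊗ a₂)) ↦ a₁ ⊗ ((h₃ ⊗ a₂) ⊗ h₁)`. -/
noncomputable def radfordInner :
    H ⊗[k] (H ⊗[k] (H ⊗[k] H)) →ₗ[k] H ⊗[k] ((H ⊗[k] H) ⊗[k] H) :=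
  (TensorProduct.assoc k H (H ⊗[k] H) H).toLinearMap ∘ₗ
    (TensorProduct.map (TensorProduct.leftComm k H H H).toLinearMap
      (LinearMap.id : H →ₗ[k] H)) ∘ₗ
    (TensorProduct.comm k H (H ⊗[k] (H ⊗[k] H))).toLinearMap

/-- The shuffle `((h₁ ⊗ h₂) ⊗ h₃) ⊗ (a₁ ⊗ a₂) ↦ (h₂ ⊗ a₁) ⊗ ((h₃ ⊗ a₂) ⊗ h₁)`. -/
noncomputable def radfordShuffle :
    ((H ⊗[k] H) ⊗[k] H) ⊗[k] (H ⊗[k] H) →ₗ[k]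
      (H ⊗[k] H) ⊗[k] ((H ⊗[k] H) ⊗[k] H) :=
  (TensorProduct.assoc k H H ((H ⊗[k] H) ⊗[k] H)).symm.toLinearMap ∘ₗ
    (TensorProduct.map (LinearMap.id : H →ₗ[k] H) radfordInner) ∘ₗ
    (TensorProduct.assoc k H H (H ⊗[k] (H ⊗[k] H))).toLinearMap ∘ₗ
    (TensorProduct.map (TensorProduct.comm k H H).toLinearMap
      (LinearMap.id : H ⊗[k] (H ⊗[k] H) →ₗ[k] H ⊗[k] (H ⊗[k] H))) ∘ₗ
    (TensorProduct.assoc k (H ⊗[k] H) H (H ⊗[k] H)).toLinearMap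

open Coalgebra HopfAlgebra WithConv

namespace HopfAlgebra
variable {R C : Type*} [CommSemiring R] [Semiring C] [HopfAlgebra R C]

lemma algHom_comp_antipode_convMul_algHom {B : Type*} [Semiring B] [Algebra R B] (g : C →ₐ[R] B) :
    toConv (g.toLinearMap ∘ₗ antipode R) * toConv g.toLinearMap = 1 := by
  have := LinearMap.algHom_comp_convMul_distrib g (toConv (antipode R)) (toConv .id)
  rw [LinearMap.antipode_mul_id] at this
  refine ofConv_injective (this.symm.trans ?_)
  ext; simp

lemma toConv_comul_eq_convMul :
    toConv (comul (R := R) (A := C)) =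
      toConv (Algebra.TensorProduct.includeLeft : C →ₐ[R] C ⊗[R] C).toLinearMap *
        toConv (Algebra.TensorProduct.includeRight : C →ₐ[R] C ⊗[R] C).toLinearMap := by
  ext c
  simp [(ℛ R c).convMul_apply, ← (ℛ R c).eq]

lemma toConv_map_antipode_comm_comul_eq_convMul :
    toConv (map (antipode R) (antipode R) ∘ₗ (TensorProduct.comm R C C).toLinearMap ∘ₗ comul) =
      toConv ((Algebra.TensorProduct.includeRight : C →ₐ[R] C ⊗[R] C).toLinearMap ∘ₗ
          antipode R) *
        toConv ((Algebra.TensorProduct.includeLeft : C →ₐ[R] C ⊗[R] C).toLinearMap ∘ₗ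
          antipode R) := by
  ext c
  simp [(ℛ R c).convMul_apply, ← (ℛ R c).eq]

lemma map_antipode_comm_comul_convMul_comul :
    toConv (map (antipode R) (antipode R) ∘ₗ (TensorProduct.comm R C C).toLinearMap ∘ₗ comul) *
      toConv (comul (R := R) (A := C)) = 1 := by
  rw [toConv_comul_eq_convMul, toConv_map_antipode_comm_comul_eq_convMul, mul_assoc,
    ← mul_assoc (toConv (Algebra.TensorProduct.includeLeft.toLinearMap ∘ₗ antipode R)),
    algHom_comp_antipode_convMul_algHom, one_mul, algHom_comp_antipode_convMul_algHom]

theorem comul_comp_antipode :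
    comul ∘ₗ antipode R =
      map (antipode R) (antipode R) ∘ₗ (TensorProduct.comm R C C).toLinearMap ∘ₗ comul (A := C) :=
  toConv_injective <| .symm <|
    left_inv_eq_right_inv map_antipode_comm_comul_convMul_comul LinearMap.comul_right_inv

end HopfAlgebra

section AntipodeInverse
variable {R A : Type*} [CommSemiring R] [Semiring A] [HopfAlgebra R A] (Sinv : A →ₗ[R] A)

lemma Sinv_one (hS1 : Sinv ∘ₗ antipode R = .id) : Sinv 1 = 1 := by
  simpa using LinearMap.congr_fun hS1 1

lemma Sinv_mul (hS1 : Sinv ∘ₗ antipode R = .id) (hS2 : antipode R ∘ₗ Sinv = .id) (x y : A) :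
    Sinv (x * y) = Sinv y * Sinv x := by
  have hS : ∀ z, antipode R (Sinv z) = z := LinearMap.congr_fun hS2
  have hinj : Function.Injective (antipode R (A := A)) :=
    Function.LeftInverse.injective (LinearMap.congr_fun hS1)
  apply hinj
  rw [antipode_mul_antidistrib, hS, hS, hS]

lemma comul_Sinv (hS1 : Sinv ∘ₗ antipode R = .id) (hS2 : antipode R ∘ₗ Sinv = .id) (x : A) :
    comul (R := R) (Sinv x) = map Sinv Sinv (TensorProduct.comm R A A (comul x)) := by
  have hinv : map Sinv Sinv ∘ₗ (TensorProduct.comm R A A).toLinearMap ∘ₗ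
      map (antipode R) (antipode R) ∘ₗ (TensorProduct.comm R A A).toLinearMap = .id := by
    ext a b
    simpa using congr($hS1 a ⊗ₜ[R] $hS1 b)
  have hcomul :
      comul x = map (antipode R) (antipode R) (TensorProduct.comm R A A (comul (Sinv x))) := by
    have hS : ∀ z, antipode R (Sinv z) = z := LinearMap.congr_fun hS2
    simpa only [LinearMap.comp_apply, LinearEquiv.coe_coe, hS] using
      LinearMap.congr_fun (comul_comp_antipode (R := R) (C := A)) (Sinv x)
  rw [hcomul]
  exact (LinearMap.congr_fun hinv _).symm

end AntipodeInverse

section Radford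
variable (β : H →ₐ[k] k) (Sinv : H →ₗ[k] H)

noncomputable def radfordTripleAct : ((H ⊗[k] H) ⊗[k] H) ⊗[k] H →ₗ[k] H :=
  LinearMap.mul' k H ∘ₗ (TensorProduct.comm k H H).toLinearMap ∘ₗ
    (TensorProduct.map
      ((TensorProduct.rid k H).toLinearMap ∘ₗ TensorProduct.map Sinv β.toLinearMap)
      (LinearMap.mul' k H)) ∘ₗ
    (TensorProduct.assoc k (H ⊗[k] H) H H).toLinearMap

lemma radfordAct_eq_comp :
    radfordAct β Sinv = radfordTripleAct β Sinv ∘ₗ map comul2 LinearMap.id := rfl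

@[simp]
lemma radfordTripleAct_tmul (x y z a : H) :
    radfordTripleAct β Sinv (((x ⊗ₜ y) ⊗ₜ z) ⊗ₜ a) = β y • (z * a * Sinv x) := by
  simp [radfordTripleAct, mul_assoc]

lemma radfordTripleAct_one (hS1 : Sinv ∘ₗ antipode k = .id) (a : H) :
    radfordTripleAct β Sinv (1 ⊗ₜ a) = a := by
  simp [Algebra.TensorProduct.one_def, Sinv_one Sinv hS1]

lemma radfordTripleAct_mul (hS1 : Sinv ∘ₗ antipode k = .id) (hS2 : antipode k ∘ₗ Sinv = .id)
    (X Y : (H ⊗[k] H) ⊗[k] H) (a : H) :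
    radfordTripleAct β Sinv ((X * Y) ⊗ₜ a) =
      radfordTripleAct β Sinv (X ⊗ₜ radfordTripleAct β Sinv (Y ⊗ₜ a)) := by
  let actA : (H ⊗[k] H) ⊗[k] H →ₗ[k] H :=
    radfordTripleAct β Sinv ∘ₗ (TensorProduct.mk k _ H).flip a
  have : (LinearMap.mul k _).compr₂ actA =
      ((TensorProduct.mk k _ H).compr₂ (radfordTripleAct β Sinv)).compl₂ actA := by
    ext x₁ x₂ x₃ y₁ y₂ y₃
    simp [actA, Sinv_mul Sinv hS1 hS2, smul_smul, mul_assoc, mul_comm (β x₂)]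
  exact congr($this X Y)

lemma comul2_one : comul2 (k := k) (1 : H) = 1 := by
  simp [comul2, Algebra.TensorProduct.one_def]

lemma comul2_mul (x y : H) : comul2 (k := k) (x * y) = comul2 x * comul2 y := by
  have : comul2 (k := k) (H := H) =
      ((Algebra.TensorProduct.map (Bialgebra.comulAlgHom k H) (AlgHom.id k H)).comp
        (Bialgebra.comulAlgHom k H)).toLinearMap := rfl
  rw [this, AlgHom.toLinearMap_apply, map_mul]
  rfl

noncomputable def radfordShuffleOf (M : Type*) [AddCommMonoid M] [Module k M] :
    ((H ⊗[k] M) ⊗[k] H) ⊗[k] (H ⊗[k] H) →ₗ[k] (M ⊗[k] H) ⊗[k] ((H ⊗[k] H) ⊗[k] H) :=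
  (TensorProduct.assoc k M H ((H ⊗[k] H) ⊗[k] H)).symm.toLinearMap ∘ₗ
    (TensorProduct.map (LinearMap.id : M →ₗ[k] M) radfordInner) ∘ₗ
    (TensorProduct.assoc k M H (H ⊗[k] (H ⊗[k] H))).toLinearMap ∘ₗ
    (TensorProduct.map (TensorProduct.comm k H M).toLinearMap LinearMap.id) ∘ₗ
    (TensorProduct.assoc k (H ⊗[k] M) H (H ⊗[k] H)).toLinearMap

lemma radfordShuffleOf_self : radfordShuffleOf (k := k) H = radfordShuffle (H := H) := rfl

@[simp]
lemma radfordShuffleOf_tmul {M : Type*} [AddCommMonoid M] [Module k M] (x z a b : H) (w : M) :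
    radfordShuffleOf (k := k) M (((x ⊗ₜ w) ⊗ₜ z) ⊗ₜ (a ⊗ₜ b)) = (w ⊗ₜ a) ⊗ₜ ((z ⊗ₜ b) ⊗ₜ x) := by
  simp [radfordShuffleOf, radfordInner, TensorProduct.leftComm]

lemma radfordShuffleOf_comp_map {M N : Type*} [AddCommMonoid M] [Module k M] [AddCommMonoid N]
    [Module k N] (f : N →ₗ[k] M) :
    radfordShuffleOf (H := H) M ∘ₗ map (map (map LinearMap.id f) LinearMap.id) LinearMap.id =
      map (map f LinearMap.id) LinearMap.id ∘ₗ radfordShuffleOf N := by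
  ext
  simp

noncomputable def fiveFoldReassoc :
    ((H ⊗[k] H) ⊗[k] H) ⊗[k] (H ⊗[k] H) ≃ₗ[k] (H ⊗[k] ((H ⊗[k] H) ⊗[k] H)) ⊗[k] H :=
  TensorProduct.congr (TensorProduct.assoc k H H H) (LinearEquiv.refl k _) ≪≫ₗ
    TensorProduct.assoc k H (H ⊗[k] H) (H ⊗[k] H) ≪≫ₗ
    TensorProduct.congr (LinearEquiv.refl k H) (TensorProduct.assoc k (H ⊗[k] H) H H).symm ≪≫ₗ
    (TensorProduct.assoc k H ((H ⊗[k] H) ⊗[k] H) H).symm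

@[simp]
lemma fiveFoldReassoc_tmul (x₁ x₂ x₃ x₄ x₅ : H) :
    fiveFoldReassoc (k := k) (((x₁ ⊗ₜ x₂) ⊗ₜ x₃) ⊗ₜ (x₄ ⊗ₜ x₅)) =
      (x₁ ⊗ₜ ((x₂ ⊗ₜ x₃) ⊗ₜ x₄)) ⊗ₜ x₅ := rfl

lemma fiveFoldReassoc_coassoc :
    map fiveFoldReassoc.toLinearMap LinearMap.id ∘ₗ
        map (map (map (comul (R := k) (A := H)) LinearMap.id) comul) comul ∘ₗ
          map comul2 LinearMap.id =
      map (map (map LinearMap.id comul2) LinearMap.id) LinearMap.id ∘ₗ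
        map comul2 (comul (R := k) (A := H)) := by
  simp only [fiveFoldReassoc, comul2, coassoc_simps]

lemma comul_comp_radfordTripleAct (hS1 : Sinv ∘ₗ antipode k = .id)
    (hS2 : antipode k ∘ₗ Sinv = .id) :
    comul ∘ₗ radfordTripleAct β Sinv =
      map (radfordTripleAct β Sinv) (radfordQ Sinv) ∘ₗ radfordShuffleOf _ ∘ₗ
        map fiveFoldReassoc.toLinearMap LinearMap.id ∘ₗ
          map (map (map comul LinearMap.id) comul) comul := by
  ext x y z a
  suffices ∀ X Z W : H ⊗[k] H, β y • (Z * W * map Sinv Sinv (TensorProduct.comm k H H X)) =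
      map (radfordTripleAct β Sinv) (radfordQ Sinv) (radfordShuffleOf _
        (map fiveFoldReassoc.toLinearMap LinearMap.id (((X ⊗ₜ y) ⊗ₜ Z) ⊗ₜ W))) by
    simpa [Bialgebra.comul_mul, comul_Sinv Sinv hS1 hS2] using this _ _ _
  intro X Z W
  induction X using TensorProduct.induction_on with
  | zero => simp
  | add X X' hX hX' => simp only [map_add, add_tmul, mul_add, smul_add, hX, hX']
  | tmul x₁ x₂ =>
    induction Z using TensorProduct.induction_on with
    | zero => simp
    | add Z Z' hZ hZ' => simp only [map_add, tmul_add, add_tmul, add_mul, smul_add, hZ, hZ']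
    | tmul z₁ z₂ =>
      induction W using TensorProduct.induction_on with
      | zero => simp
      | add W W' hW hW' => simp only [map_add, tmul_add, add_mul, mul_add, smul_add, hW, hW']
      | tmul a₁ a₂ => simp [radfordQ, TensorProduct.smul_tmul', mul_assoc]

end Radford

/-- for a Hopf algebra `H` with bijective antipode `S` and an algebra map
`β : H → k`, Radford's `H_β` — `H` with action `h ·_β a = β(h₂) h₃ a S⁻¹(h₁)` and
coaction `Δ` — is a (left-right) Yetter–Drinfel'd `H`-module: the action is a module
action and satisfies the compatibility
`ρ(h ·_β a) = h₂ ·_β a₁ ⊗ h₃ a₂ S⁻¹(h₁)` for all `h, a ∈ H`. -/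
theorem stmt19 (β : H →ₐ[k] k) (Sinv : H →ₗ[k] H)
    (hS1 : Sinv ∘ₗ HopfAlgebra.antipode (R := k) = (LinearMap.id : H →ₗ[k] H))
    (hS2 : HopfAlgebra.antipode (R := k) ∘ₗ Sinv = (LinearMap.id : H →ₗ[k] H)) :
    (∀ a : H, radfordAct β Sinv ((1 : H) ⊗ₜ[k] a) = a) ∧
    (∀ h h' a : H, radfordAct β Sinv ((h * h') ⊗ₜ[k] a) =
      radfordAct β Sinv (h ⊗ₜ[k] radfordAct β Sinv (h' ⊗ₜ[k] a))) ∧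
    Coalgebra.comul (R := k) ∘ₗ radfordAct β Sinv =
      (TensorProduct.map (radfordAct β Sinv) (radfordQ Sinv)) ∘ₗ radfordShuffle ∘ₗ
        (TensorProduct.map comul2 (Coalgebra.comul (R := k))) := by
  refine ⟨fun a => ?_, fun h h' a => ?_, ?_⟩
  · simp [radfordAct_eq_comp, comul2_one, radfordTripleAct_one β Sinv hS1]
  · simp [radfordAct_eq_comp, comul2_mul, radfordTripleAct_mul β Sinv hS1 hS2]
  rw [radfordAct_eq_comp, ← LinearMap.comp_assoc, comul_comp_radfordTripleAct β Sinv hS1 hS2]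
  simp only [LinearMap.comp_assoc, fiveFoldReassoc_coassoc]
  rw [← LinearMap.comp_assoc _ _ (radfordShuffleOf _), radfordShuffleOf_comp_map,
    radfordShuffleOf_self]
  simp only [← LinearMap.comp_assoc, ← map_comp, LinearMap.comp_id]
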